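/- For a randomized adaptive policy π^ag(ω), define X_i(ω) := E_Φ[Δ(π^ag_i(ω) | Ψ_{i-1}(ω,Φ))] / E_Φ[max_e Δ(e | Ψ_{i-1}(ω,Φ))]. If f is adaptive monotone and adaptive submodular, then for every fixed ω, f_avg(π^ag_r(ω)) ≥ (1 − e^{−X(ω)}) · f_avg(π*(ω)) where X(ω) = (1/r)Σ_{i=1}^r X_i(ω) and π* is any policy selecting at most r items. -/

import Mathlib

/-!
Run `π*` on top of `π_{i-1}`: by adaptive monotonicity this is worth at least `f_avg(π*)`, and by
adaptive submodularity each of its at most `r` steps gains at most the expected best marginal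
`M_i` at the point where `π` stopped. So the gap `f_avg(π*) - f_avg(π_{i-1})` is at most `r M_i`,
and since round `i` gains `X_i M_i`, it shrinks by the factor `1 - X_i / r`. Multiplying these
factors and using `1 - x ≤ e^{-x}` gives the bound. Averaging conditional marginals over `Φ` is the
tower property: what a policy has observed determines which realizations are consistent with it.
-/

open Finset
open scoped Classical

section Adaptive

variable {E O : Type*} [Fintype E] [Fintype O] [DecidableEq E] [Nonempty E]

/-- A partial realization: a partial assignment of states to items. -/
abbrev PReal (E O : Type*) := E → Option O

/-- A (full) realization `φ` is consistent with a partial realization `ψ`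
(written `φ ∼ ψ`) if `φ` agrees with `ψ` on the domain of `ψ`. -/
def consistentR (φ : E → O) (ψ : PReal E O) : Prop := ∀ e o, ψ e = some o → φ e = o

/-- The domain of a partial realization, i.e. the set of items already selected. -/
noncomputable def pdom (ψ : PReal E O) : Finset E :=
  Finset.univ.filter fun e => (ψ e).isSome

/-- The probability `Pr[Φ ∼ ψ]` that the random realization is consistent with `ψ`. -/
noncomputable def prMass (p : (E → O) → ℝ) (ψ : PReal E O) : ℝ :=
  ∑ φ ∈ Finset.univ.filter (fun φ => consistentR φ ψ), p φ

/-- The conditional expected marginal benefit `Δ(e | ψ)` of item `e` given the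
partial realization `ψ`. -/
noncomputable def marginal (p : (E → O) → ℝ) (f : Finset E → (E → O) → ℝ)
    (e : E) (ψ : PReal E O) : ℝ :=
  (∑ φ ∈ Finset.univ.filter (fun φ => consistentR φ ψ),
      p φ * (f (insert e (pdom ψ)) φ - f (pdom ψ) φ)) / prMass p ψ

/-- `max_e Δ(e | ψ)`, the best single-item conditional marginal benefit. -/
noncomputable def maxMarginal (p : (E → O) → ℝ) (f : Finset E → (E → O) → ℝ)
    (ψ : PReal E O) : ℝ :=
  Finset.univ.sup' Finset.univ_nonempty (fun e => marginal p f e ψ)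

/-- Adaptive monotonicity: `Δ(e | ψ) ≥ 0` for every `e` and every `ψ` with
`Pr[Φ ∼ ψ] > 0`. -/
def AdaptiveMonotone (p : (E → O) → ℝ) (f : Finset E → (E → O) → ℝ) : Prop :=
  ∀ ψ : PReal E O, 0 < prMass p ψ → ∀ e : E, 0 ≤ marginal p f e ψ

/-- `ψ` is a subrealization of `ψ'`. -/
def subreal (ψ ψ' : PReal E O) : Prop := ∀ e o, ψ e = some o → ψ' e = some o

/-- Adaptive submodularity: `Δ(e | ψ) ≥ Δ(e | ψ')` whenever `ψ ⊆ ψ'` and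
`e ∉ dom(ψ')`. -/
def AdaptiveSubmodular (p : (E → O) → ℝ) (f : Finset E → (E → O) → ℝ) : Prop :=
  ∀ ψ ψ' : PReal E O, subreal ψ ψ' → ∀ e ∉ pdom ψ', marginal p f e ψ' ≤ marginal p f e ψ

/-- A deterministic adaptive policy: picks the next item from the current
partial realization. -/
abbrev Policy (E O : Type*) := PReal E O → E

/-- `runP π φ i = Ψ_i(π, φ)`: the partial realization observed after policy `π`
selects its first `i` items under realization `φ`. -/
noncomputable def runP (π : Policy E O) (φ : E → O) : ℕ → PReal E O
  | 0 => fun _ => none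
  | (i + 1) =>
      Function.update (runP π φ i) (π (runP π φ i)) (some (φ (π (runP π φ i))))

/-- `favg p f π i = f_avg(π_i)`: the expected utility of the truncated policy `π_i`. -/
noncomputable def favg (p : (E → O) → ℝ) (f : Finset E → (E → O) → ℝ)
    (π : Policy E O) (i : ℕ) : ℝ :=
  ∑ φ : E → O, p φ * f (pdom (runP π φ i)) φ

end Adaptive

section Realizations

variable {E O : Type*}

theorem consistentR.mono {φ : E → O} {ψ ψ' : PReal E O} (h : subreal ψ ψ')
    (h' : consistentR φ ψ') : consistentR φ ψ :=
  fun e o he => h' e o (h e o he)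

/-- The join `ψ₁ ∪ ψ₂` of two partial realizations; `ψ₁` wins where both are defined, which
never matters below since both are consistent with a common realization. -/
def punion (ψ₁ ψ₂ : PReal E O) : PReal E O := fun e => (ψ₁ e).or (ψ₂ e)

theorem punion_none (ψ : PReal E O) : punion ψ (fun _ => none) = ψ := by
  funext e
  simp [punion]

theorem none_punion (ψ : PReal E O) : punion (fun _ => none) ψ = ψ := rfl

theorem subreal_punion_left (ψ₁ ψ₂ : PReal E O) : subreal ψ₁ (punion ψ₁ ψ₂) := by
  intro e o h
  simp [punion, h]

theorem consistentR_punion_iff {φ φ' : E → O} {ψ₁ ψ₂ : PReal E O}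
    (h₁ : consistentR φ ψ₁) (h₂ : consistentR φ ψ₂) :
    consistentR φ' (punion ψ₁ ψ₂) ↔ consistentR φ' ψ₁ ∧ consistentR φ' ψ₂ := by
  refine ⟨fun h => ⟨consistentR.mono (subreal_punion_left ψ₁ ψ₂) h, fun e o he => ?_⟩,
    fun ⟨h₁', h₂'⟩ e o he => ?_⟩
  · cases hc : ψ₁ e with
    | none => exact h e o (by simp [punion, hc, he])
    | some a => rw [h e a (by simp [punion, hc]), ← h₁ e a hc, h₂ e o he]
  · cases hc : ψ₁ e with
    | none => exact h₂' e o (by simpa [punion, hc] using he)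
    | some a => exact h₁' e o (by simpa [punion, hc] using he)

/-- `c φ` is the partial realization observed under `φ`, and what is observed is exactly what
determines it: the realizations consistent with `c φ` are those observing the same thing. -/
def IsObservation (c : (E → O) → PReal E O) : Prop :=
  ∀ φ φ', consistentR φ' (c φ) ↔ c φ' = c φ

theorem IsObservation.consistentR {c : (E → O) → PReal E O} (hc : IsObservation c)
    (φ : E → O) : consistentR φ (c φ) :=
  (hc φ φ).2 rfl

theorem IsObservation.punion {c d : (E → O) → PReal E O} (hc : IsObservation c)
    (hd : IsObservation d) : IsObservation fun φ => punion (c φ) (d φ) := by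
  intro φ φ'
  refine ⟨fun h => ?_, fun h => ?_⟩
  · obtain ⟨h₁, h₂⟩ := (consistentR_punion_iff (hc.consistentR φ) (hd.consistentR φ)).1 h
    show _root_.punion (c φ') (d φ') = _root_.punion (c φ) (d φ)
    rw [(hc φ φ').1 h₁, (hd φ φ').1 h₂]
  · rw [← h]
    exact (consistentR_punion_iff (hc.consistentR φ') (hd.consistentR φ')).2
      ⟨hc.consistentR φ', hd.consistentR φ'⟩

theorem isObservation_none : IsObservation fun (_ : E → O) (_ : E) => (none : Option O) :=
  fun _ _ => ⟨fun _ => rfl, fun _ _ _ h => nomatch h⟩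

variable [DecidableEq E]

theorem runP_succ (π : Policy E O) (φ : E → O) (n : ℕ) :
    runP π φ (n + 1) =
      Function.update (runP π φ n) (π (runP π φ n)) (some (φ (π (runP π φ n)))) :=
  rfl

theorem consistentR_runP (π : Policy E O) (φ : E → O) (n : ℕ) :
    consistentR φ (runP π φ n) := by
  induction n with
  | zero => intro e o h; simp [runP] at h
  | succ n ih =>
    intro e o h
    rcases eq_or_ne e (π (runP π φ n)) with rfl | he
    · rw [runP_succ, Function.update_self, Option.some_inj] at h
      exact h
    · rw [runP_succ, Function.update_of_ne he] at h
      exact ih e o h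

theorem subreal_runP_succ (π : Policy E O) (φ : E → O) (n : ℕ) :
    subreal (runP π φ n) (runP π φ (n + 1)) := by
  intro e o h
  rcases eq_or_ne e (π (runP π φ n)) with rfl | he
  · rw [runP_succ, Function.update_self, consistentR_runP π φ n _ o h]
  · rwa [runP_succ, Function.update_of_ne he]

theorem runP_eq_of_consistentR {π : Policy E O} {φ φ' : E → O} {n : ℕ}
    (h : consistentR φ' (runP π φ n)) : runP π φ' n = runP π φ n := by
  induction n with
  | zero => rfl
  | succ n ih =>
    have hn := ih (h.mono (subreal_runP_succ π φ n))
    have hsel : φ' (π (runP π φ n)) = φ (π (runP π φ n)) :=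
      h _ _ (by rw [runP_succ, Function.update_self])
    rw [runP_succ, runP_succ, hn, hsel]

theorem isObservation_runP (π : Policy E O) (n : ℕ) : IsObservation fun φ => runP π φ n :=
  fun _ _ => ⟨runP_eq_of_consistentR, fun h => h ▸ consistentR_runP π _ n⟩

theorem pdom_punion [Fintype E] (ψ₁ ψ₂ : PReal E O) :
    pdom (punion ψ₁ ψ₂) = pdom ψ₁ ∪ pdom ψ₂ := by
  ext e
  cases h : ψ₁ e <;> simp [pdom, punion, h]

theorem pdom_update [Fintype E] (ψ : PReal E O) (e : E) (o : O) :
    pdom (Function.update ψ e (some o)) = insert e (pdom ψ) := by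
  ext e'
  simp only [pdom, mem_filter, mem_univ, true_and, mem_insert]
  rcases eq_or_ne e' e with rfl | he
  · simp
  · simp [he]

theorem pdom_runP_succ [Fintype E] (π : Policy E O) (φ : E → O) (n : ℕ) :
    pdom (runP π φ (n + 1)) = insert (π (runP π φ n)) (pdom (runP π φ n)) :=
  pdom_update _ _ _

end Realizations

section Expectations

variable {E O : Type*} [Fintype E] [Fintype O] [DecidableEq E] {p : (E → O) → ℝ}
  {f : Finset E → (E → O) → ℝ}

theorem le_prMass (hp : ∀ φ, 0 ≤ p φ) {φ : E → O} {ψ : PReal E O} (h : consistentR φ ψ) :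
    p φ ≤ prMass p ψ :=
  single_le_sum (fun φ' _ => hp φ') (mem_filter.mpr ⟨mem_univ φ, h⟩)

/-- The tower property: averaging the conditional marginal `Δ(sel | c)` over `Φ` gives the
unconditional expected gain, since `c` is constant on each conditioning class. -/
theorem sum_mul_marginal (hp : ∀ φ, 0 ≤ p φ) (f : Finset E → (E → O) → ℝ)
    {c : (E → O) → PReal E O} (hc : IsObservation c) (sel : (E → O) → E)
    (hsel : ∀ φ φ', c φ' = c φ → sel φ' = sel φ) :
    ∑ φ, p φ * marginal p f (sel φ) (c φ) =
      ∑ φ, p φ * (f (insert (sel φ) (pdom (c φ))) φ - f (pdom (c φ)) φ) := by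
  set G : (E → O) → (E → O) → ℝ :=
    fun φ φ' => f (insert (sel φ) (pdom (c φ))) φ' - f (pdom (c φ)) φ'
  have hclass : ∀ φ, univ.filter (fun φ' => consistentR φ' (c φ)) =
      univ.filter (fun φ' => c φ' = c φ) := fun φ => filter_congr fun φ' _ => hc φ φ'
  calc ∑ φ, p φ * marginal p f (sel φ) (c φ)
      = ∑ φ, ∑ φ' ∈ univ.filter (fun φ' => c φ' = c φ),
          p φ * (p φ' * G φ φ') / prMass p (c φ) := by
        simp only [marginal, hclass, mul_div_assoc', mul_sum, sum_div]
        rfl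
    _ = ∑ φ', ∑ φ ∈ univ.filter (fun φ => c φ = c φ'),
          p φ * (p φ' * G φ φ') / prMass p (c φ) :=
        sum_comm' fun φ φ' => by simp [eq_comm]
    _ = ∑ φ', p φ' * G φ' φ' * (prMass p (c φ') / prMass p (c φ')) := by
        refine sum_congr rfl fun φ' _ => ?_
        have hmass : ∑ φ ∈ univ.filter (fun φ => c φ = c φ'), p φ = prMass p (c φ') := by
          rw [prMass, hclass]
        rw [← hmass, mul_div_assoc', mul_comm, sum_mul, sum_div]
        refine sum_congr rfl fun φ hφ => ?_
        have hcφ : c φ = c φ' := (mem_filter.mp hφ).2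
        rw [hcφ, show G φ φ' = G φ' φ' by simp only [G, hcφ, hsel φ' φ hcφ], hmass]
    _ = ∑ φ', p φ' * G φ' φ' := by
        refine sum_congr rfl fun φ' _ => ?_
        rcases (hp φ').eq_or_lt with h | h
        · simp [← h]
        · rw [div_self (h.trans_le (le_prMass hp (hc.consistentR φ'))).ne', mul_one]

theorem marginal_of_mem (f : Finset E → (E → O) → ℝ) {e : E} {ψ : PReal E O}
    (h : e ∈ pdom ψ) : marginal p f e ψ = 0 := by
  simp [marginal, insert_eq_self.mpr h]

theorem mul_marginal_nonneg (hp : ∀ φ, 0 ≤ p φ) (hmono : AdaptiveMonotone p f) {φ : E → O}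
    {ψ : PReal E O} (hφ : consistentR φ ψ) (e : E) : 0 ≤ p φ * marginal p f e ψ := by
  rcases (hp φ).eq_or_lt with h | h
  · simp [← h]
  · exact mul_nonneg h.le (hmono ψ (h.trans_le (le_prMass hp hφ)) e)

variable [Nonempty E]

theorem marginal_le_maxMarginal (e : E) (ψ : PReal E O) :
    marginal p f e ψ ≤ maxMarginal p f ψ :=
  le_sup' (fun e => marginal p f e ψ) (mem_univ e)

/-- A gain made after observing more than `ψ` is still at most the best gain at `ψ`: either the
item was already observed and gains nothing, or submodularity applies. -/
theorem mul_marginal_le_mul_maxMarginal (hp : ∀ φ, 0 ≤ p φ) (hmono : AdaptiveMonotone p f)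
    (hsub : AdaptiveSubmodular p f) {φ : E → O} {ψ ψ' : PReal E O} (hφ : consistentR φ ψ)
    (hψ : subreal ψ ψ') (e : E) : p φ * marginal p f e ψ' ≤ p φ * maxMarginal p f ψ := by
  by_cases he : e ∈ pdom ψ'
  · rw [marginal_of_mem f he, mul_zero]
    exact (mul_marginal_nonneg hp hmono hφ e).trans
      (mul_le_mul_of_nonneg_left (marginal_le_maxMarginal e ψ) (hp φ))
  · exact mul_le_mul_of_nonneg_left ((hsub ψ ψ' hψ e he).trans (marginal_le_maxMarginal e ψ))
      (hp φ)

end Expectations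

section Continuation

variable {E O : Type*} [Fintype E] [Fintype O] [DecidableEq E] {p : (E → O) → ℝ}
  {f : Finset E → (E → O) → ℝ}

/-- The expected utility of first observing `c Φ` and then running `σ` for `j` steps. -/
noncomputable def favgAfter (p : (E → O) → ℝ) (f : Finset E → (E → O) → ℝ)
    (c : (E → O) → PReal E O) (σ : Policy E O) (j : ℕ) : ℝ :=
  ∑ φ, p φ * f (pdom (punion (c φ) (runP σ φ j))) φ

theorem favgAfter_zero (p : (E → O) → ℝ) (f : Finset E → (E → O) → ℝ)
    (c : (E → O) → PReal E O) (σ : Policy E O) :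
    favgAfter p f c σ 0 = ∑ φ, p φ * f (pdom (c φ)) φ := by
  simp only [favgAfter, runP, punion_none]

theorem favg_eq_favgAfter (p : (E → O) → ℝ) (f : Finset E → (E → O) → ℝ) (σ : Policy E O)
    (j : ℕ) : favg p f σ j = favgAfter p f (fun _ _ => none) σ j :=
  rfl

theorem favgAfter_comm (p : (E → O) → ℝ) (f : Finset E → (E → O) → ℝ) (σ τ : Policy E O)
    (j k : ℕ) :
    favgAfter p f (fun φ => runP σ φ j) τ k = favgAfter p f (fun φ => runP τ φ k) σ j := by
  simp only [favgAfter, pdom_punion, union_comm]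

theorem favgAfter_succ (hp : ∀ φ, 0 ≤ p φ) (f : Finset E → (E → O) → ℝ)
    {c : (E → O) → PReal E O} (hc : IsObservation c) (σ : Policy E O) (j : ℕ) :
    favgAfter p f c σ (j + 1) = favgAfter p f c σ j +
      ∑ φ, p φ * marginal p f (σ (runP σ φ j)) (punion (c φ) (runP σ φ j)) := by
  have hobs := hc.punion (isObservation_runP σ j)
  have hsel : ∀ φ φ', punion (c φ') (runP σ φ' j) = punion (c φ) (runP σ φ j) →
      σ (runP σ φ' j) = σ (runP σ φ j) := fun φ φ' h => by
    have h' := ((consistentR_punion_iff (hc.consistentR φ) (consistentR_runP σ φ j)).1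
      ((hobs φ φ').2 h)).2
    rw [runP_eq_of_consistentR h']
  rw [favgAfter, favgAfter, sum_mul_marginal hp f hobs _ hsel, ← sum_add_distrib]
  refine sum_congr rfl fun φ _ => ?_
  rw [pdom_punion, pdom_punion, pdom_runP_succ, union_insert]
  ring

theorem favgAfter_zero_le (hp : ∀ φ, 0 ≤ p φ) (hmono : AdaptiveMonotone p f)
    {c : (E → O) → PReal E O} (hc : IsObservation c) (σ : Policy E O) (j : ℕ) :
    favgAfter p f c σ 0 ≤ favgAfter p f c σ j := by
  induction j with
  | zero => rfl
  | succ j ih =>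
    rw [favgAfter_succ hp f hc]
    refine le_add_of_le_of_nonneg ih (sum_nonneg fun φ _ => mul_marginal_nonneg hp hmono ?_ _)
    exact (consistentR_punion_iff (hc.consistentR φ) (consistentR_runP σ φ j)).2
      ⟨hc.consistentR φ, consistentR_runP σ φ j⟩

theorem favgAfter_le [Nonempty E] (hp : ∀ φ, 0 ≤ p φ) (hmono : AdaptiveMonotone p f)
    (hsub : AdaptiveSubmodular p f) {c : (E → O) → PReal E O} (hc : IsObservation c)
    (σ : Policy E O) (j : ℕ) :
    favgAfter p f c σ j ≤ favgAfter p f c σ 0 + j * ∑ φ, p φ * maxMarginal p f (c φ) := by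
  induction j with
  | zero => simp
  | succ j ih =>
    rw [favgAfter_succ hp f hc, Nat.cast_succ, add_one_mul, ← add_assoc]
    exact add_le_add ih (sum_le_sum fun φ _ => mul_marginal_le_mul_maxMarginal hp hmono hsub
      (hc.consistentR φ) (subreal_punion_left _ _) _)

theorem favg_nonneg (hp : ∀ φ, 0 ≤ p φ) (hf : ∀ S φ, 0 ≤ f S φ) (σ : Policy E O) (j : ℕ) :
    0 ≤ favg p f σ j :=
  sum_nonneg fun φ _ => mul_nonneg (hp φ) (hf _ φ)

theorem favg_succ (hp : ∀ φ, 0 ≤ p φ) (f : Finset E → (E → O) → ℝ) (π : Policy E O) (m : ℕ) :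
    favg p f π (m + 1) =
      favg p f π m + ∑ φ, p φ * marginal p f (π (runP π φ m)) (runP π φ m) := by
  simp only [favg_eq_favgAfter, favgAfter_succ hp f isObservation_none, none_punion]

/-- Running `π*` for `r` steps on top of `π_m` (worth at least `f_avg(π*_r)` by monotonicity)
gains at most `r` times the expected best marginal after `π_m` (by submodularity). -/
theorem favg_le_favg_add_mul [Nonempty E] (hp : ∀ φ, 0 ≤ p φ) (hmono : AdaptiveMonotone p f)
    (hsub : AdaptiveSubmodular p f) (π πstar : Policy E O) (r m : ℕ) :
    favg p f πstar r ≤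
      favg p f π m + r * ∑ φ, p φ * maxMarginal p f (runP π φ m) :=
  calc favg p f πstar r = favgAfter p f (fun φ => runP πstar φ r) π 0 :=
        (favgAfter_zero p f _ π).symm
    _ ≤ favgAfter p f (fun φ => runP πstar φ r) π m :=
        favgAfter_zero_le hp hmono (isObservation_runP πstar r) π m
    _ = favgAfter p f (fun φ => runP π φ m) πstar r := favgAfter_comm p f πstar π r m
    _ ≤ favgAfter p f (fun φ => runP π φ m) πstar 0 +
          r * ∑ φ, p φ * maxMarginal p f (runP π φ m) :=
        favgAfter_le hp hmono hsub (isObservation_runP π m) πstar r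
    _ = favg p f π m + r * ∑ φ, p φ * maxMarginal p f (runP π φ m) := by
        rw [favgAfter_zero]; rfl

end Continuation

theorem le_prod_one_sub_mul {g x : ℕ → ℝ} {B : ℝ} (n : ℕ) (hx : ∀ i ∈ Icc 1 n, x i ≤ 1)
    (hstep : ∀ i ∈ Icc 1 n, g i ≤ (1 - x i) * g (i - 1)) (h0 : g 0 ≤ B) :
    g n ≤ (∏ i ∈ Icc 1 n, (1 - x i)) * B := by
  induction n with
  | zero => simpa using h0
  | succ n ih =>
    have hmem : n + 1 ∈ Icc 1 (n + 1) := mem_Icc.2 ⟨n.succ_pos, le_rfl⟩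
    have hsub : Icc 1 n ⊆ Icc 1 (n + 1) := Icc_subset_Icc_right n.le_succ
    have hg := ih (fun i hi => hx i (hsub hi)) fun i hi => hstep i (hsub hi)
    calc g (n + 1) ≤ (1 - x (n + 1)) * g n := hstep (n + 1) hmem
      _ ≤ (1 - x (n + 1)) * ((∏ i ∈ Icc 1 n, (1 - x i)) * B) :=
          mul_le_mul_of_nonneg_left hg (sub_nonneg.2 (hx (n + 1) hmem))
      _ = (∏ i ∈ Icc 1 (n + 1), (1 - x i)) * B := by
          rw [prod_Icc_succ_top (Nat.le_add_left 1 n)]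
          ring

theorem prod_one_sub_le_exp_neg_sum {ι : Type*} {s : Finset ι} {x : ι → ℝ}
    (hx : ∀ i ∈ s, x i ≤ 1) : ∏ i ∈ s, (1 - x i) ≤ Real.exp (-∑ i ∈ s, x i) := by
  rw [← sum_neg_distrib, Real.exp_sum]
  exact prod_le_prod (fun i hi => sub_nonneg.2 (hx i hi)) fun i _ => Real.one_sub_le_exp_neg _

theorem sub_le_one_sub_mul {D N M r : ℝ} (hr : 0 < r) (hM : 0 < M) (hN : 0 ≤ N)
    (hD : D ≤ r * M) : D - N ≤ (1 - 1 / r * (N / M)) * D := by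
  have hDr : D / r ≤ M := by rwa [div_le_iff₀ hr, mul_comm]
  have hgain : N / M * (D / r) ≤ N :=
    calc N / M * (D / r) ≤ N / M * M := mul_le_mul_of_nonneg_left hDr (div_nonneg hN hM.le)
      _ = N := div_mul_cancel₀ N hM.ne'
  calc D - N ≤ D - N / M * (D / r) := by linarith
    _ = (1 - 1 / r * (N / M)) * D := by ring

theorem one_sub_exp_mul_le {a N M : ℕ → ℝ} {A : ℝ} (r : ℕ) (ha : 0 ≤ a 0) (hA : 0 ≤ A)
    (hN : ∀ i ∈ Icc 1 r, 0 ≤ N i) (hNM : ∀ i ∈ Icc 1 r, N i ≤ M i)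
    (hM : ∀ i ∈ Icc 1 r, 0 < M i) (hsucc : ∀ i ∈ Icc 1 r, a i = a (i - 1) + N i)
    (hAM : ∀ i ∈ Icc 1 r, A ≤ a (i - 1) + r * M i) :
    (1 - Real.exp (-((1 / r : ℝ) * ∑ i ∈ Icc 1 r, N i / M i))) * A ≤ a r := by
  have hr : ∀ i ∈ Icc 1 r, (1 : ℝ) ≤ r := fun i hi => by
    exact_mod_cast (mem_Icc.1 hi).1.trans (mem_Icc.1 hi).2
  have hx : ∀ i ∈ Icc 1 r, 1 / r * (N i / M i) ≤ 1 := fun i hi =>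
    mul_le_one₀ (div_le_one_of_le₀ (hr i hi) (by positivity))
      (div_nonneg (hN i hi) (hM i hi).le) ((div_le_one (hM i hi)).2 (hNM i hi))
  have hgap : A - a r ≤ (∏ i ∈ Icc 1 r, (1 - 1 / r * (N i / M i))) * A :=
    le_prod_one_sub_mul (g := fun i => A - a i) r hx (fun i hi => by
      rw [hsucc i hi, sub_add_eq_sub_sub]
      exact sub_le_one_sub_mul (by linarith [hr i hi]) (hM i hi) (hN i hi)
        (by linarith [hAM i hi])) (by linarith)
  have hexp := mul_le_mul_of_nonneg_right (prod_one_sub_le_exp_neg_sum hx) hA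
  rw [← mul_sum] at hexp
  linarith

theorem random_approx_ratio_general {E O : Type*} [Fintype E] [Fintype O] [DecidableEq E]
    [Nonempty E] (p : (E → O) → ℝ) (hp : ∀ φ, 0 ≤ p φ)
    (f : Finset E → (E → O) → ℝ) (hf : ∀ S φ, 0 ≤ f S φ)
    (hmono : AdaptiveMonotone p f) (hsub : AdaptiveSubmodular p f)
    (π πstar : Policy E O) (r : ℕ)
    (hpos : ∀ i ∈ Finset.Icc 1 r,
      0 < ∑ φ : E → O, p φ * maxMarginal p f (runP π φ (i - 1))) :
    (1 - Real.exp (-((1 / r : ℝ) * ∑ i ∈ Finset.Icc 1 r,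
          (∑ φ : E → O, p φ * marginal p f (π (runP π φ (i - 1))) (runP π φ (i - 1))) /
            (∑ φ : E → O, p φ * maxMarginal p f (runP π φ (i - 1)))))) *
        favg p f πstar r
      ≤ favg p f π r := by
  refine one_sub_exp_mul_le r (favg_nonneg hp hf π 0) (favg_nonneg hp hf πstar r)
    (fun i _ => sum_nonneg fun φ _ => mul_marginal_nonneg hp hmono (consistentR_runP π φ _) _)
    (fun i _ => sum_le_sum fun φ _ =>
      mul_le_mul_of_nonneg_left (marginal_le_maxMarginal _ _) (hp φ))
    hpos (fun i hi => ?_) (fun i _ => favg_le_favg_add_mul hp hmono hsub π πstar r (i - 1))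
  obtain ⟨k, rfl⟩ : ∃ k, i = k + 1 := Nat.exists_eq_add_of_le' (mem_Icc.1 hi).1
  exact favg_succ hp f π k

/-- (Lemma 5) For a fixed value `ω` of the internal randomness, let
`X_i = E_Φ[Δ(π^ag_i(ω) | Ψ_{i-1}(ω,Φ))] / E_Φ[max_e Δ(e | Ψ_{i-1}(ω,Φ))]`.
If `f` is adaptive monotone and adaptive submodular, then the (now deterministic) policy
`π = π^ag(ω)` satisfies `f_avg(π_r) ≥ (1 − e^{−X̄})·f_avg(π*)` where
`X̄ = (1/r) Σ_{i=1}^r X_i` and `π*` is any policy selecting at most `r` items. -/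
theorem random_approx_ratio {E O : Type*} [Fintype E] [Fintype O] [DecidableEq E]
    [Nonempty E] (p : (E → O) → ℝ) (hp : ∀ φ, 0 ≤ p φ) (hp1 : ∑ φ : E → O, p φ = 1)
    (f : Finset E → (E → O) → ℝ) (hf : ∀ S φ, 0 ≤ f S φ)
    (hmono : AdaptiveMonotone p f) (hsub : AdaptiveSubmodular p f)
    (π πstar : Policy E O) (r : ℕ) (hr : 0 < r)
    (hpos : ∀ i ∈ Finset.Icc 1 r,
      0 < ∑ φ : E → O, p φ * maxMarginal p f (runP π φ (i - 1))) :
    (1 - Real.exp (-((1 / r : ℝ) * ∑ i ∈ Finset.Icc 1 r,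
          (∑ φ : E → O, p φ * marginal p f (π (runP π φ (i - 1))) (runP π φ (i - 1))) /
            (∑ φ : E → O, p φ * maxMarginal p f (runP π φ (i - 1)))))) *
        favg p f πstar r
      ≤ favg p f π r :=
  random_approx_ratio_general p hp f hf hmono hsub π πstar r hpos
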